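/- Let M ≥ 1, let Ω₀ be a p×p real symmetric positive definite matrix with Σ₀ = Ω₀⁻¹ satisfying Λmax(Σ₀) ≤ M, and let s ∈ ℝ^p have nonnegative entries with Σ₀ − (1/2)diag(s) positive semidefinite; set B₀ = (2diag(s) − diag(s)Ω₀diag(s))^{1/2} (assumed positive semidefinite). Let Z be an n×p random matrix with i.i.d. N(0,1) entries and X an n×p random matrix independent of Z whose rows are i.i.d. N(0, Σ₀). Then there exist constants c > 0 and C > 0 depending only on M such that for all integers n ≥ 1 and p ≥ 2 with C²·log p ≤ n, P( ‖n⁻¹ B₀ᵀZᵀX‖_max ≤ C·√((log p)/n) ) ≥ 1 − C·p^{−c}. In particular, the same bound holds for sup over all S ⊆ {1,…,p} of ‖n⁻¹B_{0,S}ᵀZᵀX‖_max, where B_{0,S} is the column submatrix of B₀ indexed by S. -/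

import Mathlib

open Matrix MeasureTheory ProbabilityTheory Finset
open scoped Classical BigOperators ENNReal

noncomputable section

/-- Entrywise maximum norm of a real matrix. -/
def maxNorm {m n : Type*} [Fintype m] [Fintype n] (A : Matrix m n ℝ) : ℝ :=
  ⨆ i, ⨆ j, |A i j|

/-- Largest eigenvalue (Rayleigh quotient sup) of a real symmetric matrix. -/
def lambdaMax {n : Type*} [Fintype n] (A : Matrix n n ℝ) : ℝ :=
  sSup {r | ∃ x : n → ℝ, ∑ i, (x i) ^ 2 = 1 ∧ r = x ⬝ᵥ A.mulVec x}

/-- Positive semidefinite square root (0 if the matrix is not psd). -/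
def msqrt {n : Type*} [Fintype n] [DecidableEq n] (A : Matrix n n ℝ) : Matrix n n ℝ :=
  if h : A.PosSemidef then
    (h.1.eigenvectorUnitary : Matrix n n ℝ) *
      Matrix.diagonal ((RCLike.ofReal : ℝ → ℝ) ∘ Real.sqrt ∘ h.1.eigenvalues) *
      (star h.1.eigenvectorUnitary : Matrix n n ℝ)
  else 0

/-- Column submatrix with columns in `S`. -/
def colSub {m p : Type*} (A : Matrix m p ℝ) (S : Finset p) : Matrix m {j // j ∈ S} ℝ :=
  A.submatrix id (fun j => (j : p))

/-- `B^Ω`, the psd square root of `2 diag(s) - diag(s) Ω diag(s)`. -/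
def Bmat {p : ℕ} (s : Fin p → ℝ) (Om : Matrix (Fin p) (Fin p) ℝ) :
    Matrix (Fin p) (Fin p) ℝ :=
  msqrt ((2 : ℝ) • Matrix.diagonal s - Matrix.diagonal s * Om * Matrix.diagonal s)

/-- A random vector is centered Gaussian with covariance `V` iff every linear functional
of it is a centered real Gaussian with the corresponding variance. -/
def IsCenteredGaussian {W : Type*} [MeasurableSpace W] (μ : Measure W)
    {ι : Type*} [Fintype ι] (X : W → ι → ℝ) (V : Matrix ι ι ℝ) : Prop :=
  ∀ a : ι → ℝ, μ.map (fun ω => ∑ i, a i * X ω i) =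
    ProbabilityTheory.gaussianReal 0 (Real.toNNReal (a ⬝ᵥ V.mulVec a))

/-! ### Auxiliary lemmas -/

section Aux

open Real
open scoped NNReal

lemma lint_exp_lin (v : ℝ≥0) (c : ℝ) :
    ∫⁻ x, ENNReal.ofReal (rexp (c * x)) ∂(gaussianReal 0 v)
      = ENNReal.ofReal (rexp (c ^ 2 * v / 2)) := by
  rcases eq_or_ne v 0 with hv | hv
  · subst hv; rw [gaussianReal_zero_var, lintegral_dirac]; simp
  · have hvpos : (0:ℝ) < v := by positivity
    rw [gaussianReal_of_var_ne_zero 0 hv,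
      lintegral_withDensity_eq_lintegral_mul _ (measurable_gaussianPDF 0 v)
        (by fun_prop)]
    have hφ : ∀ x : ℝ, (gaussianPDF 0 v * fun x => ENNReal.ofReal (rexp (c * x))) x
        = ENNReal.ofReal (((Real.sqrt (2 * π * v))⁻¹ * rexp (c ^ 2 * v / 2)) *
            rexp (-(2 * (v:ℝ))⁻¹ * (x - c * v) ^ 2)) := by
      intro x
      simp only [Pi.mul_apply, gaussianPDF, gaussianPDFReal, sub_zero]
      rw [← ENNReal.ofReal_mul (by positivity)]
      congr 1
      have he : c * x + -x ^ 2 / (2 * (v:ℝ)) =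
          c ^ 2 * v / 2 + -(2 * (v:ℝ))⁻¹ * (x - c * v) ^ 2 := by
        field_simp
        ring
      rw [mul_assoc ((Real.sqrt (2*π*(v:ℝ)))⁻¹), mul_assoc ((Real.sqrt (2*π*(v:ℝ)))⁻¹),
        ← Real.exp_add, ← Real.exp_add]
      congr 1
      rw [Real.exp_eq_exp]
      linarith
    simp_rw [hφ]
    have hb : (0:ℝ) < (2 * (v:ℝ))⁻¹ := by positivity
    have hint : Integrable (fun x : ℝ =>
        ((Real.sqrt (2 * π * v))⁻¹ * rexp (c ^ 2 * v / 2)) *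
          rexp (-(2 * (v:ℝ))⁻¹ * (x - c * v) ^ 2)) :=
      ((integrable_exp_neg_mul_sq hb).comp_sub_right (c * v)).const_mul _
    rw [← ofReal_integral_eq_lintegral_ofReal hint
      (Filter.Eventually.of_forall fun x => by positivity)]
    rw [integral_const_mul, integral_sub_right_eq_self
      (fun x => rexp (-(2 * (v:ℝ))⁻¹ * x ^ 2)) (c * v), integral_gaussian]
    congr 1
    have h2 : π / (2 * (v:ℝ))⁻¹ = 2 * π * v := by field_simp
    rw [h2, mul_comm ((Real.sqrt (2*π*(v:ℝ)))⁻¹), mul_assoc,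
      inv_mul_cancel₀ (by positivity), mul_one]

lemma lint_exp_sq (v : ℝ≥0) (b : ℝ) (hb : 0 ≤ b) (h : 2 * b * v ≤ 1 / 2) :
    ∫⁻ x, ENNReal.ofReal (rexp (b * x ^ 2)) ∂(gaussianReal 0 v)
      ≤ ENNReal.ofReal (rexp (2 * b * v)) := by
  rcases eq_or_ne v 0 with hv | hv
  · subst hv; rw [gaussianReal_zero_var, lintegral_dirac]; simp
  · have hvpos : (0:ℝ) < v := by positivity
    have hu0 : (0:ℝ) ≤ 2 * b * v := by positivity
    have hu1 : (0:ℝ) < 1 - 2 * b * v := by linarith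
    have ha : (0:ℝ) < (2 * (v:ℝ))⁻¹ - b := by
      have h2v : (0:ℝ) < 2 * v := by positivity
      rw [sub_pos, show (2*(v:ℝ))⁻¹ = 1/(2*v) by rw [one_div], lt_div_iff₀ h2v]
      nlinarith
    rw [gaussianReal_of_var_ne_zero 0 hv,
      lintegral_withDensity_eq_lintegral_mul _ (measurable_gaussianPDF 0 v)
        (by fun_prop)]
    have hφ : ∀ x : ℝ, (gaussianPDF 0 v * fun x => ENNReal.ofReal (rexp (b * x ^ 2))) x
        = ENNReal.ofReal ((Real.sqrt (2 * π * v))⁻¹ *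
            rexp (-((2 * (v:ℝ))⁻¹ - b) * x ^ 2)) := by
      intro x
      simp only [Pi.mul_apply, gaussianPDF, gaussianPDFReal, sub_zero]
      rw [← ENNReal.ofReal_mul (by positivity)]
      congr 1
      rw [mul_assoc ((Real.sqrt (2*π*(v:ℝ)))⁻¹), ← Real.exp_add]
      congr 1
      rw [Real.exp_eq_exp]
      field_simp
      ring
    simp_rw [hφ]
    have hint : Integrable (fun x : ℝ =>
        (Real.sqrt (2 * π * v))⁻¹ * rexp (-((2 * (v:ℝ))⁻¹ - b) * x ^ 2)) :=
      (integrable_exp_neg_mul_sq ha).const_mul _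
    rw [← ofReal_integral_eq_lintegral_ofReal hint
      (Filter.Eventually.of_forall fun x => by positivity)]
    rw [integral_const_mul, integral_gaussian]
    apply ENNReal.ofReal_le_ofReal
    have hval : (Real.sqrt (2 * π * v))⁻¹ * Real.sqrt (π / ((2 * (v:ℝ))⁻¹ - b))
        = Real.sqrt ((1 - 2 * b * v)⁻¹) := by
      rw [← Real.sqrt_inv, ← Real.sqrt_mul (by positivity)]
      congr 1
      have hne : (1:ℝ) - 2 * b * v ≠ 0 := ne_of_gt hu1
      have key : (2*(v:ℝ))⁻¹ - b = (1 - 2*b*v) / (2*v) := by field_simp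
      rw [key, div_div_eq_mul_div]
      have hπ : π ≠ 0 := ne_of_gt Real.pi_pos
      field_simp
    rw [hval]
    have h2 : (1 - 2 * b * (v:ℝ))⁻¹ ≤ rexp (2 * b * v) ^ 2 := by
      rw [sq, ← Real.exp_add, inv_eq_one_div, div_le_iff₀ hu1]
      nlinarith [Real.add_one_le_exp (2*b*(v:ℝ) + 2*b*(v:ℝ))]
    calc Real.sqrt ((1 - 2 * b * (v:ℝ))⁻¹) ≤ Real.sqrt (rexp (2 * b * v) ^ 2) :=
          Real.sqrt_le_sqrt h2
      _ = rexp (2 * b * v) := by rw [Real.sqrt_sq (Real.exp_nonneg _)]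

lemma iIndep_lintegral_prod {Ω : Type*} [MeasurableSpace Ω] {μ : Measure Ω}
    [IsProbabilityMeasure μ] {ι : Type*} [Fintype ι] [DecidableEq ι] {β : Type*}
    [MeasurableSpace β]
    {f : ι → Ω → β} (hf : iIndepFun f μ)
    (hfm : ∀ i, Measurable (f i)) (g : ι → β → ℝ≥0∞) (hg : ∀ i, Measurable (g i)) :
    ∫⁻ ω, ∏ i, g i (f i ω) ∂μ = ∏ i, ∫⁻ ω, g i (f i ω) ∂μ := by
  have hcomp : iIndepFun (fun i ω => g i (f i ω)) μ :=
    hf.comp g hg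
  have hm : ∀ i, Measurable (fun ω => g i (f i ω)) := fun i => (hg i).comp (hfm i)
  have key : ∀ s : Finset ι,
      ∫⁻ ω, ∏ i ∈ s, g i (f i ω) ∂μ = ∏ i ∈ s, ∫⁻ ω, g i (f i ω) ∂μ := by
    intro s
    induction s using Finset.induction_on with
    | empty => simp
    | insert a s' hns ih =>
      set P : Ω → ℝ≥0∞ := fun ω => ∏ j ∈ s', g j (f j ω) with hPdef
      have hP : (∏ j ∈ s', fun ω => g j (f j ω)) = P := by
        funext ω; rw [Finset.prod_apply]
      have hPmeas : Measurable P := Finset.measurable_prod _ fun j _ => hm j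
      have hindep : IndepFun P (fun ω => g a (f a ω)) μ :=
        hP ▸ hcomp.indepFun_finset_prod_of_notMem hm hns
      have hmul := lintegral_mul_eq_lintegral_mul_lintegral_of_indepFun
        hPmeas (hm a) hindep
      simp only [Pi.mul_apply] at hmul
      calc ∫⁻ ω, ∏ i ∈ insert a s', g i (f i ω) ∂μ
          = ∫⁻ ω, P ω * g a (f a ω) ∂μ := by
            congr 1; funext ω; rw [hPdef, Finset.prod_insert hns, mul_comm]
        _ = (∫⁻ ω, P ω ∂μ) * ∫⁻ ω, g a (f a ω) ∂μ := hmul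
        _ = ∏ i ∈ insert a s', ∫⁻ ω, g i (f i ω) ∂μ := by
            rw [Finset.prod_insert hns, ih, mul_comm]
  simpa using key Finset.univ

lemma chernoff {Ω : Type*} [MeasurableSpace Ω] (μ : Measure Ω)
    (S : Ω → ℝ) (hS : Measurable S) (t lam κ : ℝ) (ht : 0 ≤ t)
    (hmgf : ∫⁻ ω, ENNReal.ofReal (rexp (t * S ω)) ∂μ ≤ ENNReal.ofReal κ) :
    μ {ω | lam ≤ S ω} ≤ ENNReal.ofReal (rexp (-(t * lam)) * κ) := by
  have hsub : {ω | lam ≤ S ω} ⊆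
      {ω | ENNReal.ofReal (rexp (t * lam)) ≤ ENNReal.ofReal (rexp (t * S ω))} := by
    intro ω hω
    exact ENNReal.ofReal_le_ofReal (Real.exp_le_exp.mpr (mul_le_mul_of_nonneg_left hω ht))
  calc μ {ω | lam ≤ S ω} ≤ μ {ω | ENNReal.ofReal (rexp (t * lam)) ≤
        ENNReal.ofReal (rexp (t * S ω))} := measure_mono hsub
    _ ≤ (ENNReal.ofReal (rexp (t * lam)))⁻¹ *
        ∫⁻ ω, ENNReal.ofReal (rexp (t * S ω)) ∂μ := by
        set ε := ENNReal.ofReal (rexp (t * lam)) with hε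
        have hε0 : ε ≠ 0 := by
          simp [hε, ENNReal.ofReal_eq_zero, not_le, Real.exp_pos]
        have hεtop : ε ≠ ⊤ := ENNReal.ofReal_ne_top
        have hmark := mul_meas_ge_le_lintegral₀
          (f := fun ω => ENNReal.ofReal (rexp (t * S ω)))
          (by fun_prop : AEMeasurable (fun ω => ENNReal.ofReal (rexp (t * S ω))) μ) ε
        calc μ {ω | ε ≤ ENNReal.ofReal (rexp (t * S ω))}
            = ε⁻¹ * (ε * μ {ω | ε ≤ ENNReal.ofReal (rexp (t * S ω))}) := by
              rw [← mul_assoc, ENNReal.inv_mul_cancel hε0 hεtop, one_mul]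
          _ ≤ ε⁻¹ * ∫⁻ ω, ENNReal.ofReal (rexp (t * S ω)) ∂μ :=
              mul_le_mul_right hmark _
    _ ≤ (ENNReal.ofReal (rexp (t * lam)))⁻¹ * ENNReal.ofReal κ :=
        mul_le_mul_right hmgf _
    _ = ENNReal.ofReal (rexp (-(t * lam)) * κ) := by
        rw [ENNReal.ofReal_mul (by positivity), Real.exp_neg, ENNReal.ofReal_inv_of_pos
          (Real.exp_pos _)]

lemma mgf_bound {W : Type} [MeasurableSpace W] (μ : Measure W) [IsProbabilityMeasure μ]
    {n p : ℕ} (Z X : W → Fin n → Fin p → ℝ) (hZm : Measurable Z) (hXm : Measurable X)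
    (hZindep : iIndepFun
      (fun ij : Fin n × Fin p => fun ω => Z ω ij.1 ij.2) μ)
    (hZlaw : ∀ i j, μ.map (fun ω => Z ω i j) = gaussianReal 0 1)
    (hXZ : IndepFun X Z μ)
    (hXindep : iIndepFun (fun i ω => X ω i) μ)
    (b : Fin p → ℝ) (k : Fin p) (v : ℝ) (hv : 0 ≤ v)
    (hXk : ∀ i, μ.map (fun ω => X ω i k) = gaussianReal 0 (Real.toNNReal v))
    (t : ℝ)
    (hsmall : t ^ 2 * (∑ l, (b l) ^ 2) * v ≤ 1 / 2) :
    ∫⁻ ω, ENNReal.ofReal (rexp (t * ∑ i, (∑ l, b l * Z ω i l) * X ω i k)) ∂μ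
      ≤ ENNReal.ofReal (rexp (n * (t ^ 2 * (∑ l, (b l) ^ 2) * v))) := by
  haveI : IsProbabilityMeasure (μ.map X) := Measure.isProbabilityMeasure_map hXm.aemeasurable
  haveI : IsProbabilityMeasure (μ.map Z) := Measure.isProbabilityMeasure_map hZm.aemeasurable
  set σ2 : ℝ := ∑ l, (b l) ^ 2 with hσ2
  have hσ2nn : 0 ≤ σ2 := Finset.sum_nonneg fun l _ => sq_nonneg _
  set β : ℝ := t ^ 2 * σ2 / 2 with hβ
  have hβnn : 0 ≤ β := by positivity
  set F : (Fin n → Fin p → ℝ) × (Fin n → Fin p → ℝ) → ℝ≥0∞ :=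
    fun q => ENNReal.ofReal (rexp (t * ∑ i, (∑ l, b l * q.2 i l) * q.1 i k)) with hF
  have hFmeas : Measurable F := by fun_prop
  have hmap : μ.map (fun ω => (X ω, Z ω)) = (μ.map X).prod (μ.map Z) :=
    (indepFun_iff_map_prod_eq_prod_map_map hXm.aemeasurable hZm.aemeasurable).mp hXZ
  have step1 : ∫⁻ ω, ENNReal.ofReal (rexp (t * ∑ i, (∑ l, b l * Z ω i l) * X ω i k)) ∂μ
      = ∫⁻ x, ∫⁻ z, F (x, z) ∂(μ.map Z) ∂(μ.map X) := by
    rw [← lintegral_prod F hFmeas.aemeasurable, ← hmap,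
      lintegral_map hFmeas (hXm.prodMk hZm)]
  have step2 : ∀ x : Fin n → Fin p → ℝ,
      ∫⁻ z, F (x, z) ∂(μ.map Z) = ENNReal.ofReal (rexp (β * ∑ i, (x i k) ^ 2)) := by
    intro x
    have hmeas2 : Measurable fun z : Fin n → Fin p → ℝ => F (x, z) :=
      hFmeas.comp (measurable_prodMk_left)
    rw [lintegral_map hmeas2 hZm]
    have hexp : ∀ ω, t * ∑ i, (∑ l, b l * Z ω i l) * x i k
        = ∑ e : Fin n × Fin p, (t * x e.1 k * b e.2) * Z ω e.1 e.2 := by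
      intro ω
      simp only [Finset.mul_sum, Finset.sum_mul, Fintype.sum_prod_type]
      exact Finset.sum_congr rfl fun i _ => Finset.sum_congr rfl fun l _ => by ring
    have key : ∫⁻ ω, ∏ e : Fin n × Fin p,
        (fun y => ENNReal.ofReal (rexp ((t * x e.1 k * b e.2) * y))) (Z ω e.1 e.2) ∂μ
        = ∏ e : Fin n × Fin p,
          ∫⁻ ω, ENNReal.ofReal (rexp ((t * x e.1 k * b e.2) * Z ω e.1 e.2)) ∂μ :=
      iIndep_lintegral_prod hZindep
        (fun e => by fun_prop)
        (fun e y => ENNReal.ofReal (rexp ((t * x e.1 k * b e.2) * y)))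
        (fun e => by fun_prop)
    have lhs_eq : (fun ω => F (x, Z ω)) = fun ω => ∏ e : Fin n × Fin p,
        ENNReal.ofReal (rexp ((t * x e.1 k * b e.2) * Z ω e.1 e.2)) := by
      funext ω
      rw [hF]
      simp only
      rw [hexp ω, Real.exp_sum, ENNReal.ofReal_prod_of_nonneg
        (fun e _ => (Real.exp_pos _).le)]
    rw [lhs_eq, key]
    have factor : ∀ e : Fin n × Fin p,
        ∫⁻ ω, ENNReal.ofReal (rexp ((t * x e.1 k * b e.2) * Z ω e.1 e.2)) ∂μ
          = ENNReal.ofReal (rexp ((t * x e.1 k * b e.2) ^ 2 / 2)) := by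
      intro e
      have hmeasz : Measurable fun ω => Z ω e.1 e.2 := by fun_prop
      calc ∫⁻ ω, ENNReal.ofReal (rexp ((t * x e.1 k * b e.2) * Z ω e.1 e.2)) ∂μ
          = ∫⁻ y, ENNReal.ofReal (rexp ((t * x e.1 k * b e.2) * y))
              ∂(μ.map (fun ω => Z ω e.1 e.2)) :=
            (lintegral_map (f := fun y => ENNReal.ofReal (rexp ((t * x e.1 k * b e.2) * y)))
              (by fun_prop) hmeasz).symm
        _ = ENNReal.ofReal (rexp ((t * x e.1 k * b e.2) ^ 2 / 2)) := by
            rw [hZlaw e.1 e.2, lint_exp_lin]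
            norm_num
    simp_rw [factor]
    rw [← ENNReal.ofReal_prod_of_nonneg (fun e _ => (Real.exp_pos _).le), ← Real.exp_sum]
    congr 2
    rw [hβ, hσ2, Fintype.sum_prod_type, Finset.mul_sum]
    refine Finset.sum_congr rfl fun i _ => ?_
    simp only [Finset.sum_mul, Finset.mul_sum, Finset.sum_div]
    exact Finset.sum_congr rfl fun l _ => by ring
  simp_rw [step1, step2]
  have step3 : ∫⁻ x, ENNReal.ofReal (rexp (β * ∑ i, (x i k) ^ 2)) ∂(μ.map X)
      = ∏ i : Fin n, ∫⁻ ω, ENNReal.ofReal (rexp (β * (X ω i k) ^ 2)) ∂μ := by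
    rw [lintegral_map (by fun_prop) hXm]
    have lhs_eq : (fun ω => ENNReal.ofReal (rexp (β * ∑ i, (X ω i k) ^ 2)))
        = fun ω => ∏ i : Fin n,
            (fun r : Fin p → ℝ => ENNReal.ofReal (rexp (β * (r k) ^ 2))) (X ω i) := by
      funext ω
      simp only
      rw [Finset.mul_sum, Real.exp_sum, ENNReal.ofReal_prod_of_nonneg
        (fun i _ => (Real.exp_pos _).le)]
    rw [lhs_eq]
    simpa using iIndep_lintegral_prod hXindep
      (fun i => by fun_prop)
      (fun i r => ENNReal.ofReal (rexp (β * (r k) ^ 2)))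
      (fun i => by fun_prop)
  rw [step3]
  have factor_le : ∀ i : Fin n,
      ∫⁻ ω, ENNReal.ofReal (rexp (β * (X ω i k) ^ 2)) ∂μ
        ≤ ENNReal.ofReal (rexp (t ^ 2 * σ2 * v)) := by
    intro i
    have hmeasx : Measurable fun ω => X ω i k := by fun_prop
    have hmapx : ∫⁻ ω, ENNReal.ofReal (rexp (β * (X ω i k) ^ 2)) ∂μ
        = ∫⁻ y, ENNReal.ofReal (rexp (β * y ^ 2)) ∂(gaussianReal 0 (Real.toNNReal v)) := by
      rw [← hXk i]
      exact (lintegral_map (f := fun y => ENNReal.ofReal (rexp (β * y ^ 2)))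
        (by fun_prop) hmeasx).symm
    rw [hmapx]
    have h2βv : 2 * β * (Real.toNNReal v : ℝ) ≤ 1 / 2 := by
      rw [Real.coe_toNNReal v hv, hβ]
      calc 2 * (t ^ 2 * σ2 / 2) * v = t ^ 2 * σ2 * v := by ring
        _ ≤ 1 / 2 := hsmall
    calc ∫⁻ y, ENNReal.ofReal (rexp (β * y ^ 2)) ∂(gaussianReal 0 (Real.toNNReal v))
        ≤ ENNReal.ofReal (rexp (2 * β * (Real.toNNReal v : ℝ))) :=
          lint_exp_sq _ β hβnn h2βv
      _ = ENNReal.ofReal (rexp (t ^ 2 * σ2 * v)) := by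
          rw [Real.coe_toNNReal v hv]; congr 1; rw [hβ]; ring
  calc ∏ i : Fin n, ∫⁻ ω, ENNReal.ofReal (rexp (β * (X ω i k) ^ 2)) ∂μ
      ≤ ∏ _i : Fin n, ENNReal.ofReal (rexp (t ^ 2 * σ2 * v)) :=
        Finset.prod_le_prod' fun i _ => factor_le i
    _ = ENNReal.ofReal (rexp (n * (t ^ 2 * σ2 * v))) := by
        rw [Finset.prod_const, Finset.card_univ, Fintype.card_fin,
          ← ENNReal.ofReal_pow (Real.exp_pos _).le, ← Real.exp_nat_mul]

lemma quadform_single {p : ℕ} (A : Matrix (Fin p) (Fin p) ℝ) (k : Fin p) :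
    (Pi.single k 1 : Fin p → ℝ) ⬝ᵥ A.mulVec (Pi.single k 1) = A k k := by
  rw [Matrix.mulVec_single, single_dotProduct]
  simp

lemma psd_diag_nonneg {p : ℕ} {A : Matrix (Fin p) (Fin p) ℝ} (h : A.PosSemidef) (k : Fin p) :
    0 ≤ A k k := by
  have := h.dotProduct_mulVec_nonneg (Pi.single k 1)
  rwa [star_trivial, quadform_single] at this

lemma diag_le_lambdaMax {p : ℕ} (A : Matrix (Fin p) (Fin p) ℝ) (k : Fin p) :
    A k k ≤ lambdaMax A := by
  have hmem : A k k ∈ {r | ∃ x : Fin p → ℝ, ∑ i, (x i) ^ 2 = 1 ∧ r = x ⬝ᵥ A.mulVec x} := by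
    refine ⟨Pi.single k 1, ?_, (quadform_single A k).symm⟩
    simp [Pi.single_apply]
  have hbdd : BddAbove {r | ∃ x : Fin p → ℝ, ∑ i, (x i) ^ 2 = 1 ∧ r = x ⬝ᵥ A.mulVec x} := by
    refine ⟨∑ i, ∑ j, |A i j|, ?_⟩
    rintro r ⟨x, hx, rfl⟩
    have hxi : ∀ i, |x i| ≤ 1 := by
      intro i
      have h1 : (x i) ^ 2 ≤ 1 := by
        rw [← hx]
        exact Finset.single_le_sum (fun j _ => sq_nonneg (x j)) (Finset.mem_univ i)
      nlinarith [abs_nonneg (x i), sq_abs (x i)]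
    calc x ⬝ᵥ A.mulVec x = ∑ i, x i * ∑ j, A i j * x j := rfl
      _ ≤ ∑ i, ∑ j, |A i j| := by
        refine Finset.sum_le_sum fun i _ => ?_
        calc x i * ∑ j, A i j * x j ≤ |x i * ∑ j, A i j * x j| := le_abs_self _
          _ = |x i| * |∑ j, A i j * x j| := abs_mul _ _
          _ ≤ 1 * ∑ j, |A i j * x j| :=
              mul_le_mul (hxi i) ((Finset.abs_sum_le_sum_abs _ _)) (abs_nonneg _)
                zero_le_one
          _ = ∑ j, |A i j| * |x j| := by
              rw [one_mul]
              exact Finset.sum_congr rfl fun j _ => abs_mul _ _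
          _ ≤ ∑ j, |A i j| := Finset.sum_le_sum fun j _ => by
              nlinarith [abs_nonneg (A i j), abs_nonneg (x j), hxi j]
  unfold lambdaMax
  exact le_csSup hbdd hmem

lemma msqrt_col_sq {p : ℕ} (T : Matrix (Fin p) (Fin p) ℝ) (hT : T.PosSemidef) (j : Fin p) :
    ∑ l, (msqrt T l j) ^ 2 = T j j := by
  have hs : msqrt T = (hT.1.eigenvectorUnitary : Matrix (Fin p) (Fin p) ℝ) *
      Matrix.diagonal ((RCLike.ofReal : ℝ → ℝ) ∘ Real.sqrt ∘ hT.1.eigenvalues) *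
      (star hT.1.eigenvectorUnitary : Matrix (Fin p) (Fin p) ℝ) := dif_pos hT
  have hherm : (msqrt T).IsHermitian := by
    rw [hs, IsHermitian, conjTranspose_mul, conjTranspose_mul, diagonal_conjTranspose,
      ← star_eq_conjTranspose, ← star_eq_conjTranspose, star_star, Matrix.mul_assoc]
    simp [Matrix.mul_assoc]
  have hmul : msqrt T * msqrt T = T := by
    conv_rhs => rw [hT.1.spectral_theorem, Unitary.conjStarAlgAut_apply]
    rw [hs]
    have hu : (star hT.1.eigenvectorUnitary : Matrix (Fin p) (Fin p) ℝ) *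
        (hT.1.eigenvectorUnitary : Matrix (Fin p) (Fin p) ℝ) = 1 :=
      Unitary.coe_star_mul_self _
    rw [show ∀ A D E : Matrix (Fin p) (Fin p) ℝ, A * D * E * (A * D * E) =
        A * (D * (E * A) * D) * E from fun A D E => by simp only [Matrix.mul_assoc], hu,
      Matrix.mul_one, diagonal_mul_diagonal]
    congr 3
    funext i
    simp [Real.mul_self_sqrt (hT.eigenvalues_nonneg i)]
  calc ∑ l, (msqrt T l j) ^ 2 = ∑ l, msqrt T j l * msqrt T l j := by
        refine Finset.sum_congr rfl fun l _ => ?_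
        rw [sq]
        congr 1
        exact (congrFun (congrFun hherm j) l).symm ▸ rfl
    _ = (msqrt T * msqrt T) j j := (Matrix.mul_apply).symm
    _ = T j j := by rw [hmul]

end Aux

set_option maxHeartbeats 1000000 in
/-- with high probability, `‖n⁻¹ B₀ᵀ Zᵀ X‖_max ≤ C √((log p)/n)`,
uniformly over all column subsets `S`. -/
theorem stmt_9 :
    ∀ M : ℝ, 1 ≤ M →
      ∃ c > (0 : ℝ), ∃ C > (0 : ℝ),
        ∀ (n p : ℕ), 1 ≤ n → 2 ≤ p → C ^ 2 * Real.log p ≤ n →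
          ∀ (Om₀ : Matrix (Fin p) (Fin p) ℝ) (s : Fin p → ℝ),
            Om₀.IsSymm → Om₀.PosDef →
            lambdaMax (Om₀⁻¹) ≤ M →
            (∀ j, 0 ≤ s j) →
            (Om₀⁻¹ - (1 / 2 : ℝ) • Matrix.diagonal s).PosSemidef →
            ((2 : ℝ) • Matrix.diagonal s -
                Matrix.diagonal s * Om₀ * Matrix.diagonal s).PosSemidef →
            ∀ (W : Type) [inst : MeasurableSpace W] (μ : Measure W),
              IsProbabilityMeasure μ →
              ∀ (Z X : W → Fin n → Fin p → ℝ),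
                Measurable Z → Measurable X →
                -- Z has i.i.d. N(0,1) entries
                iIndepFun
                  (fun ij : Fin n × Fin p => fun ω => Z ω ij.1 ij.2) μ →
                (∀ i j, μ.map (fun ω => Z ω i j) = gaussianReal 0 1) →
                -- X is independent of Z, with i.i.d. N(0, Σ₀) rows
                IndepFun X Z μ →
                iIndepFun (fun i ω => X ω i) μ →
                (∀ i, IsCenteredGaussian μ (fun ω => X ω i) (Om₀⁻¹)) →
                ENNReal.ofReal (1 - C * (p : ℝ) ^ (-c)) ≤
                  μ {ω |
                    maxNorm ((n : ℝ)⁻¹ •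
                        ((Bmat s Om₀)ᵀ * (Matrix.of (Z ω))ᵀ * Matrix.of (X ω))) ≤
                      C * Real.sqrt (Real.log p / n) ∧
                    ∀ S : Finset (Fin p),
                      maxNorm ((n : ℝ)⁻¹ •
                          ((colSub (Bmat s Om₀) S)ᵀ * (Matrix.of (Z ω))ᵀ *
                            Matrix.of (X ω))) ≤
                        C * Real.sqrt (Real.log p / n)} := by
  intro M hM
  refine ⟨1, one_pos, 8 * M, by linarith, ?_⟩
  intro n p hn hp hCn Om₀ s hsym hpd hlam hs hpsd1 hTpsd W instW μ hμ Z X hZm hXm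
    hZindep hZlaw hXZ hXindep hXg
  classical
  have hM0 : (0:ℝ) < M := lt_of_lt_of_le one_pos hM
  have hp0 : 0 < p := lt_of_lt_of_le (by norm_num) hp
  have hppos : (0:ℝ) < p := by exact_mod_cast hp0
  have hp2 : (2:ℝ) ≤ p := by exact_mod_cast hp
  have hn0 : (0:ℝ) < n := by exact_mod_cast hn
  set L := Real.log p with hLdef
  have hL : 0 < L := Real.log_pos (by linarith)
  have hCn' : (8 * M)^2 * L ≤ (n:ℝ) := hCn
  set T : Matrix (Fin p) (Fin p) ℝ :=
    (2 : ℝ) • Matrix.diagonal s - Matrix.diagonal s * Om₀ * Matrix.diagonal s with hTdef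
  set B := Bmat s Om₀ with hBdef
  set Sig := Om₀⁻¹ with hSigdef
  have hSigpd : Sig.PosDef := hpd.inv
  have rvnn : ∀ k, 0 ≤ Sig k k := fun k => psd_diag_nonneg hSigpd.posSemidef k
  have hvle : ∀ k, Sig k k ≤ M := fun k => le_trans (diag_le_lambdaMax Sig k) hlam
  have hsle : ∀ j, s j ≤ 2 * M := by
    intro j
    have h0 := psd_diag_nonneg hpsd1 j
    have heq : (Sig - (1/2 : ℝ) • Matrix.diagonal s) j j = Sig j j - (1/2) * s j := by
      simp [Matrix.sub_apply, Matrix.smul_apply, Matrix.diagonal_apply_eq]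
    rw [heq] at h0
    have := hvle j
    linarith
  have hσ2 : ∀ j, ∑ l, (B l j) ^ 2 = T j j := fun j => msqrt_col_sq T hTpsd j
  have hTjj : ∀ j, T j j ≤ 4 * M := by
    intro j
    have hOm : 0 ≤ Om₀ j j := psd_diag_nonneg hpd.posSemidef j
    have heq : T j j = 2 * s j - s j * Om₀ j j * s j := by
      rw [hTdef]
      simp [Matrix.sub_apply, Matrix.smul_apply, Matrix.diagonal_apply_eq,
        Matrix.mul_diagonal, Matrix.diagonal_mul]
    rw [heq]
    have h1 := hs j; have h2 := hsle j
    nlinarith [mul_nonneg (mul_nonneg h1 hOm) h1]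
  have hXk : ∀ i k, μ.map (fun ω => X ω i k) = gaussianReal 0 (Real.toNNReal (Sig k k)) := by
    intro i k
    have h := hXg i (Pi.single k 1)
    have hfun : (fun ω => ∑ m, (Pi.single k 1 : Fin p → ℝ) m * X ω i m)
        = fun ω => X ω i k := by
      funext ω
      simp [Pi.single_apply, ite_mul]
    rw [hfun, quadform_single] at h
    exact h
  set r : ℝ := 8 * M * Real.sqrt (L / n) with hrdef
  have hr0 : 0 ≤ r := by positivity
  set lam : ℝ := n * r with hlamdef
  set t : ℝ := lam / (8 * M^2 * n) with htdef
  have hlam0 : 0 ≤ lam := by positivity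
  have ht0 : 0 ≤ t := by positivity
  have hlamsq : lam ^ 2 = 64 * M^2 * n * L := by
    rw [hlamdef, hrdef, mul_pow, mul_pow, mul_pow, Real.sq_sqrt (by positivity)]
    field_simp
    ring
  have ht2 : t ^ 2 = L / (M^2 * n) := by
    rw [htdef, div_pow, hlamsq]
    rw [div_eq_div_iff (by positivity) (by positivity)]
    ring
  have htlam : t * lam = 8 * L := by
    rw [htdef, div_mul_eq_mul_div, ← sq, hlamsq]
    rw [div_eq_iff (by positivity)]
    ring
  have hLn : L / n ≤ 1 / (64 * M^2) := by
    rw [div_le_div_iff₀ hn0 (by positivity)]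
    calc L * (64 * M^2) = (8*M)^2 * L := by ring
      _ ≤ (n:ℝ) := hCn'
      _ = 1 * (n:ℝ) := (one_mul _).symm
  -- tail bound
  have tail : ∀ (b : Fin p → ℝ) (k : Fin p), (∑ l, (b l)^2 ≤ 4 * M) →
      μ {ω | lam ≤ ∑ i, (∑ l, b l * Z ω i l) * X ω i k}
        ≤ ENNReal.ofReal (Real.exp (-(4 * L))) := by
    intro b k hb
    have hbnn : 0 ≤ ∑ l, (b l)^2 := Finset.sum_nonneg fun l _ => sq_nonneg _
    have hsv : (∑ l, (b l)^2) * Sig k k ≤ 4 * M^2 := by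
      have h1 := rvnn k; have h2 := hvle k
      nlinarith
    have ht24 : t^2 * (4*M^2) = 4 * (L/n) := by
      rw [ht2]
      field_simp
    have hsmall : t ^ 2 * (∑ l, (b l)^2) * Sig k k ≤ 1/2 := by
      have h1 : t^2 * (∑ l, (b l)^2) * Sig k k ≤ t^2 * (4*M^2) := by
        calc t^2 * (∑ l, (b l)^2) * Sig k k = t^2 * ((∑ l, (b l)^2) * Sig k k) := by ring
          _ ≤ t^2 * (4*M^2) := mul_le_mul_of_nonneg_left hsv (sq_nonneg t)
      have h2 : 4 * (L/n) ≤ 4 * (1/(64*M^2)) := by linarith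
      have h3 : 4 * (1/(64*(M:ℝ)^2)) ≤ 1/2 := by
        rw [mul_one_div, div_le_div_iff₀ (by positivity) (by norm_num)]
        nlinarith
      linarith [ht24 ▸ h1]
    have hmgf := mgf_bound μ Z X hZm hXm hZindep hZlaw hXZ hXindep b k (Sig k k)
      (rvnn k) (fun i => hXk i k) t hsmall
    have hSmeas : Measurable fun ω => ∑ i, (∑ l, b l * Z ω i l) * X ω i k := by
      apply Finset.measurable_sum
      intro i _
      exact (Finset.measurable_sum _ fun l _ => by fun_prop).mul (by fun_prop)
    have hch := chernoff μ _ hSmeas t lam _ ht0 hmgf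
    refine le_trans hch (ENNReal.ofReal_le_ofReal ?_)
    rw [← Real.exp_add]
    apply Real.exp_le_exp.mpr
    have hnt : (n:ℝ) * (t^2 * (∑ l, (b l)^2) * Sig k k) ≤ (n:ℝ) * (t^2 * (4*M^2)) := by
      apply mul_le_mul_of_nonneg_left _ hn0.le
      calc t^2 * (∑ l, (b l)^2) * Sig k k = t^2 * ((∑ l, (b l)^2) * Sig k k) := by ring
        _ ≤ t^2 * (4*M^2) := mul_le_mul_of_nonneg_left hsv (sq_nonneg t)
    have h4L : (n:ℝ) * (t^2*(4*M^2)) = 4*L := by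
      rw [ht24]
      field_simp
    linarith
  -- entries
  set Ent : Fin p → Fin p → W → ℝ :=
    fun j k ω => ∑ i, (∑ l, B l j * Z ω i l) * X ω i k with hEnt
  have hEntMeas : ∀ j k, Measurable (Ent j k) := by
    intro j k
    apply Finset.measurable_sum
    intro i _
    exact (Finset.measurable_sum _ fun l _ => by fun_prop).mul (by fun_prop)
  have hσ2le : ∀ j, ∑ l, (B l j)^2 ≤ 4 * M := fun j => le_trans (le_of_eq (hσ2 j)) (hTjj j)
  have htailpos : ∀ j k, μ {ω | lam ≤ Ent j k ω} ≤ ENNReal.ofReal (Real.exp (-(4*L))) :=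
    fun j k => tail (fun l => B l j) k (hσ2le j)
  have htailneg : ∀ j k, μ {ω | lam ≤ -Ent j k ω} ≤ ENNReal.ofReal (Real.exp (-(4*L))) := by
    intro j k
    have hset : {ω | lam ≤ -Ent j k ω}
        = {ω | lam ≤ ∑ i, (∑ l, (-(B l j)) * Z ω i l) * X ω i k} := by
      ext ω
      simp only [Set.mem_setOf_eq, hEnt]
      have : ∑ i, (∑ l, (-(B l j)) * Z ω i l) * X ω i k
          = -∑ i, (∑ l, B l j * Z ω i l) * X ω i k := by
        rw [← Finset.sum_neg_distrib]
        refine Finset.sum_congr rfl fun i _ => ?_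
        rw [← neg_mul, ← Finset.sum_neg_distrib]
        congr 1
        exact Finset.sum_congr rfl fun l _ => by ring
      rw [this]
    rw [hset]
    exact tail (fun l => -(B l j)) k (by simpa [neg_sq] using hσ2le j)
  -- good event
  set Gset : Set W := {ω | ∀ j k, |Ent j k ω| ≤ lam} with hGdef
  have hGmeas : MeasurableSet Gset := by
    have heq : Gset = ⋂ j, ⋂ k, {ω | |Ent j k ω| ≤ lam} := by
      ext ω; simp [hGdef, Set.mem_iInter]
    rw [heq]
    exact MeasurableSet.iInter fun j => MeasurableSet.iInter fun k =>
      measurableSet_le ((hEntMeas j k).abs) measurable_const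
  have hsubbad : Gsetᶜ ⊆
      ⋃ e : Fin p × Fin p, ({ω | lam ≤ Ent e.1 e.2 ω} ∪ {ω | lam ≤ -Ent e.1 e.2 ω}) := by
    intro ω hω
    simp only [hGdef, Set.mem_compl_iff, Set.mem_setOf_eq, not_forall, not_le] at hω
    obtain ⟨j, k, hjk⟩ := hω
    refine Set.mem_iUnion.mpr ⟨(j, k), ?_⟩
    rcases le_abs.mp (le_of_lt hjk) with h | h
    · exact Or.inl h
    · exact Or.inr h
  have hbad : μ Gsetᶜ ≤ ENNReal.ofReal ((p:ℝ) * ((p:ℝ) * (2 * Real.exp (-(4*L))))) := by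
    calc μ Gsetᶜ ≤ μ (⋃ e : Fin p × Fin p,
          ({ω | lam ≤ Ent e.1 e.2 ω} ∪ {ω | lam ≤ -Ent e.1 e.2 ω})) := measure_mono hsubbad
      _ ≤ ∑' e : Fin p × Fin p,
            μ ({ω | lam ≤ Ent e.1 e.2 ω} ∪ {ω | lam ≤ -Ent e.1 e.2 ω}) := measure_iUnion_le _
      _ = ∑ e : Fin p × Fin p,
            μ ({ω | lam ≤ Ent e.1 e.2 ω} ∪ {ω | lam ≤ -Ent e.1 e.2 ω}) := tsum_fintype _
      _ ≤ ∑ _e : Fin p × Fin p,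
            (ENNReal.ofReal (Real.exp (-(4*L))) + ENNReal.ofReal (Real.exp (-(4*L)))) :=
          Finset.sum_le_sum fun e _ => le_trans (measure_union_le _ _)
            (add_le_add (htailpos e.1 e.2) (htailneg e.1 e.2))
      _ = ENNReal.ofReal ((p:ℝ) * ((p:ℝ) * (2 * Real.exp (-(4*L))))) := by
          rw [Finset.sum_const, Finset.card_univ, Fintype.card_prod, Fintype.card_fin,
            ← ENNReal.ofReal_add (Real.exp_nonneg _) (Real.exp_nonneg _), nsmul_eq_mul]
          rw [← ENNReal.ofReal_natCast (p * p), ← ENNReal.ofReal_mul (by positivity)]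
          congr 1
          push_cast
          ring
  -- the probability bound
  have hεle : (p:ℝ) * ((p:ℝ) * (2 * Real.exp (-(4*L)))) ≤ 8*M*(p:ℝ)^(-(1:ℝ)) := by
    have hexp4 : Real.exp (-(4*L)) = ((p:ℝ)^(4:ℕ))⁻¹ := by
      have h1 : ((p:ℝ)^(4:ℕ) : ℝ) = Real.exp (L * 4) := by
        rw [← Real.rpow_natCast (p:ℝ) 4, Real.rpow_def_of_pos hppos]
        norm_num
        exact hLdef.symm
      rw [h1, ← Real.exp_neg]
      congr 1
      ring
    rw [hexp4, Real.rpow_neg hppos.le, Real.rpow_one]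
    have hlhs : (p:ℝ) * ((p:ℝ) * (2 * ((p:ℝ)^(4:ℕ))⁻¹)) = 2/(p:ℝ)^2 := by
      field_simp
    rw [hlhs, show 8*M*((p:ℝ))⁻¹ = (8*M)/(p:ℝ) by rw [div_eq_mul_inv],
      div_le_div_iff₀ (by positivity) hppos]
    nlinarith
  have hprob : ENNReal.ofReal (1 - 8*M*(p:ℝ)^(-(1:ℝ))) ≤ μ Gset := by
    have hone : μ Gset + μ Gsetᶜ = 1 := by
      rw [measure_add_measure_compl hGmeas, measure_univ]
    have hstep : (1:ℝ≥0∞) - ENNReal.ofReal ((p:ℝ) * ((p:ℝ) * (2 * Real.exp (-(4*L)))))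
        ≤ μ Gset := by
      rw [tsub_le_iff_right]
      calc (1:ℝ≥0∞) = μ Gset + μ Gsetᶜ := hone.symm
        _ ≤ μ Gset + ENNReal.ofReal ((p:ℝ) * ((p:ℝ) * (2 * Real.exp (-(4*L))))) :=
            add_le_add_right hbad _
    refine le_trans ?_ hstep
    by_cases h : 1 - 8*M*(p:ℝ)^(-(1:ℝ)) ≤ 0
    · rw [ENNReal.ofReal_of_nonpos h]
      exact zero_le
    · push_neg at h
      apply ENNReal.le_sub_of_add_le_right ENNReal.ofReal_ne_top
      rw [← ENNReal.ofReal_add h.le (by positivity)]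
      calc ENNReal.ofReal (1 - 8*M*(p:ℝ)^(-(1:ℝ)) + (p:ℝ) * ((p:ℝ) * (2 * Real.exp (-(4*L)))))
          ≤ ENNReal.ofReal 1 := ENNReal.ofReal_le_ofReal (by linarith)
        _ = 1 := ENNReal.ofReal_one
  -- entry identities
  have hentry : ∀ (ω : W) (j k : Fin p),
      (Bᵀ * (Matrix.of (Z ω))ᵀ * Matrix.of (X ω)) j k = Ent j k ω := by
    intro ω j k
    rw [hEnt]
    simp only [Matrix.mul_apply, Matrix.transpose_apply, Matrix.of_apply]
  have hentry2 : ∀ (ω : W) (S : Finset (Fin p)) (j : {x // x ∈ S}) (k : Fin p),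
      ((colSub B S)ᵀ * (Matrix.of (Z ω))ᵀ * Matrix.of (X ω)) j k = Ent (j : Fin p) k ω := by
    intro ω S j k
    rw [hEnt]
    simp only [Matrix.mul_apply, Matrix.transpose_apply, Matrix.of_apply, colSub,
      Matrix.submatrix_apply, id_eq]
  -- inclusion
  have hGsub : Gset ⊆ {ω |
      maxNorm ((n : ℝ)⁻¹ • (Bᵀ * (Matrix.of (Z ω))ᵀ * Matrix.of (X ω)))
        ≤ 8 * M * Real.sqrt (L / n) ∧
      ∀ S : Finset (Fin p),
        maxNorm ((n : ℝ)⁻¹ • ((colSub B S)ᵀ * (Matrix.of (Z ω))ᵀ * Matrix.of (X ω)))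
          ≤ 8 * M * Real.sqrt (L / n)} := by
    intro ω hω
    have hbound : ∀ j k, |(n:ℝ)⁻¹ * Ent j k ω| ≤ r := by
      intro j k
      rw [abs_mul, abs_of_nonneg (inv_nonneg.mpr hn0.le)]
      calc (n:ℝ)⁻¹ * |Ent j k ω| ≤ (n:ℝ)⁻¹ * lam :=
          mul_le_mul_of_nonneg_left (hω j k) (inv_nonneg.mpr hn0.le)
        _ = r := by rw [hlamdef, ← mul_assoc, inv_mul_cancel₀ (ne_of_gt hn0), one_mul]
    constructor
    · unfold maxNorm
      refine Real.iSup_le (fun j => Real.iSup_le (fun k => ?_) hr0) hr0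
      rw [Matrix.smul_apply, smul_eq_mul, hentry]
      exact hbound j k
    · intro S
      unfold maxNorm
      refine Real.iSup_le (fun j => Real.iSup_le (fun k => ?_) hr0) hr0
      rw [Matrix.smul_apply, smul_eq_mul, hentry2]
      exact hbound (j : Fin p) k
  exact le_trans hprob (measure_mono hGsub)


end
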